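/- arXiv:2301.13163 — 3 statements merged into one kernel-verified Lean document; each statement's English description precedes it below -/
import Mathlib

section
/- Let A ∈ ℝ^{m×n}, C a submatrix of k columns of A, R a submatrix of k rows of A, and M = C† A R†. Then ‖A − C M R‖₂ ≤ ‖(I − C C†) A‖₂ + ‖A (I − R† R)‖₂. -/
open Matrix

/-- Spectral norm (operator 2-norm) of a real matrix. -/
noncomputable def spec {m n : ℕ} (A : Matrix (Fin m) (Fin n) ℝ) : ℝ :=
  ‖LinearMap.toContinuousLinearMap (Matrix.toEuclideanLin A)‖

/-- A selection matrix: columns of the identity matrix indexed by distinct indices. -/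
def IsSelection {m k : ℕ} (P : Matrix (Fin m) (Fin k) ℝ) : Prop :=
  ∃ p : Fin k → Fin m, Function.Injective p ∧
    P = Matrix.of fun i j => if i = p j then (1 : ℝ) else 0

/-- Moore–Penrose pseudoinverse, characterized by the four Penrose conditions. -/
def IsMoorePenrose {m n : ℕ} (A : Matrix (Fin m) (Fin n) ℝ)
    (Ap : Matrix (Fin n) (Fin m) ℝ) : Prop :=
  A * Ap * A = A ∧ Ap * A * Ap = Ap ∧ (A * Ap)ᵀ = A * Ap ∧ (Ap * A)ᵀ = Ap * A

/-
The residual splits as `A - C M R = (I - C C†) A + C C† (A (I - R† R))`; the triangle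
inequality and `‖C C†‖₂ ≤ 1` for the orthogonal projection `C C†` give the bound.
-/

open scoped Matrix.Norms.L2Operator

lemma spec_eq_l2_opNorm {m n : ℕ} (A : Matrix (Fin m) (Fin n) ℝ) : spec A = ‖A‖ := rfl

lemma Matrix.l2_opNorm_mul_le_of_isStarProjection {𝕜 : Type*} [RCLike 𝕜] {m n : Type*}
    [Fintype m] [DecidableEq m] [Fintype n] [DecidableEq n] {Q : Matrix m m 𝕜}
    (hQ : IsStarProjection Q) (B : Matrix m n 𝕜) : ‖Q * B‖ ≤ ‖B‖ :=
  (l2_opNorm_mul Q B).trans (mul_le_of_le_one_left (norm_nonneg B) hQ.norm_le)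

lemma IsMoorePenrose.isStarProjection_mul_pinv {m n : ℕ} {A : Matrix (Fin m) (Fin n) ℝ}
    {Ap : Matrix (Fin n) (Fin m) ℝ} (h : IsMoorePenrose A Ap) : IsStarProjection (A * Ap) where
  isIdempotentElem := by rw [IsIdempotentElem, ← Matrix.mul_assoc, h.1]
  isSelfAdjoint := by
    rw [IsSelfAdjoint, star_eq_conjTranspose, conjTranspose_eq_transpose_of_trivial, h.2.2.1]

lemma Matrix.sub_mul_mul_mul_eq_add {α : Type*} [Ring α] {m n k l : Type*} [Fintype m]
    [DecidableEq m] [Fintype n] [DecidableEq n] [Fintype k] [Fintype l]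
    (A : Matrix m n α) (C : Matrix m k α) (R : Matrix l n α) (Cp : Matrix k m α)
    (Rp : Matrix n l α) :
    A - C * (Cp * A * Rp) * R = (1 - C * Cp) * A + C * Cp * (A * (1 - Rp * R)) := by
  simp only [Matrix.sub_mul, Matrix.mul_sub, Matrix.mul_one, Matrix.one_mul, Matrix.mul_assoc]
  abel

theorem cur_error_bound_general {m n k : ℕ}
    (A : Matrix (Fin m) (Fin n) ℝ)
    (C : Matrix (Fin m) (Fin k) ℝ) (R : Matrix (Fin k) (Fin n) ℝ)
    (Cp : Matrix (Fin k) (Fin m) ℝ) (Rp : Matrix (Fin n) (Fin k) ℝ)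
    (hCp : IsMoorePenrose C Cp)
    (M : Matrix (Fin k) (Fin k) ℝ) (hM : M = Cp * A * Rp) :
    spec (A - C * M * R) ≤ spec ((1 - C * Cp) * A) + spec (A * (1 - Rp * R)) := by
  simp only [spec_eq_l2_opNorm]
  rw [hM, sub_mul_mul_mul_eq_add]
  calc ‖(1 - C * Cp) * A + C * Cp * (A * (1 - Rp * R))‖
      ≤ ‖(1 - C * Cp) * A‖ + ‖C * Cp * (A * (1 - Rp * R))‖ := norm_add_le _ _
    _ ≤ ‖(1 - C * Cp) * A‖ + ‖A * (1 - Rp * R)‖ := by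
      gcongr
      exact Matrix.l2_opNorm_mul_le_of_isStarProjection hCp.isStarProjection_mul_pinv _

/-- ‖A − C M R‖₂ ≤ ‖(I − C C†) A‖₂ + ‖A (I − R† R)‖₂. -/
theorem cur_error_bound {m n k : ℕ}
    (A : Matrix (Fin m) (Fin n) ℝ)
    (S : Matrix (Fin n) (Fin k) ℝ) (P : Matrix (Fin m) (Fin k) ℝ)
    (hS : IsSelection S) (hP : IsSelection P)
    (C : Matrix (Fin m) (Fin k) ℝ) (R : Matrix (Fin k) (Fin n) ℝ)
    (hC : C = A * S) (hR : R = Pᵀ * A)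
    (Cp : Matrix (Fin k) (Fin m) ℝ) (Rp : Matrix (Fin n) (Fin k) ℝ)
    (hCp : IsMoorePenrose C Cp) (hRp : IsMoorePenrose R Rp)
    (M : Matrix (Fin k) (Fin k) ℝ) (hM : M = Cp * A * Rp) :
    spec (A - C * M * R) ≤ spec ((1 - C * Cp) * A) + spec (A * (1 - Rp * R)) :=
  cur_error_bound_general A C R Cp Rp hCp M hM
end

section
/- Let ℙ be a projector on ℝⁿ (ℙ² = ℙ) with ℙ ≠ 0 and ℙ ≠ I. Then ‖I − ℙ‖₂ = ‖ℙ‖₂. -/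
/-!
Write `x = u + v` with `u = T x` and `v = x - T x`, so that `T u = u` and `T v = 0`. The vector
`y = ‖v‖² u - ⟪u, v⟫ v`, a multiple of the component of `u` orthogonal to `v`, satisfies
`T y = ‖v‖² u`, while `‖v‖² ‖u‖² ‖x‖² - ‖y‖² = ‖v‖² (‖u‖² + ⟪u, v⟫)² ≥ 0`. Hence
`‖v‖² ‖u‖ ≤ ‖T‖ ‖y‖ ≤ ‖T‖ ‖v‖ ‖u‖ ‖x‖`, i.e. `‖(1 - T) x‖ ≤ ‖T‖ ‖x‖` (when `u = 0` use `‖T‖ ≥ 1`).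
As `1 - T` is again idempotent, the reverse inequality follows by symmetry.
-/

open Matrix

open scoped RealInnerProductSpace

theorem IsIdempotentElem.one_le_norm {R : Type*} [NonUnitalNormedRing R] {p : R}
    (hp : IsIdempotentElem p) (h0 : p ≠ 0) : 1 ≤ ‖p‖ := by
  have hpos : 0 < ‖p‖ := norm_pos_iff.mpr h0
  have : ‖p‖ * 1 ≤ ‖p‖ * ‖p‖ := by simpa [hp.eq] using norm_mul_le p p
  exact le_of_mul_le_mul_left this hpos

variable {E : Type*} [NormedAddCommGroup E] [InnerProductSpace ℝ E]

theorem norm_sq_smul_sub_inner_smul_le (u v : E) :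
    ‖‖v‖ ^ 2 • u - ⟪u, v⟫ • v‖ ≤ ‖v‖ * ‖u‖ * ‖u + v‖ := by
  set t := ⟪u, v⟫
  have lhs : ‖‖v‖ ^ 2 • u - t • v‖ ^ 2 = ‖v‖ ^ 2 * (‖v‖ ^ 2 * ‖u‖ ^ 2 - t ^ 2) := by
    rw [norm_sub_sq_real, norm_smul, norm_smul, real_inner_smul_left, real_inner_smul_right]
    simp only [Real.norm_eq_abs, abs_pow, abs_norm, mul_pow, sq_abs]
    ring
  have rhs : ‖u + v‖ ^ 2 = ‖u‖ ^ 2 + 2 * t + ‖v‖ ^ 2 := norm_add_sq_real u v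
  refine le_of_pow_le_pow_left₀ two_ne_zero (by positivity) ?_
  rw [lhs, mul_pow, rhs]
  nlinarith [mul_nonneg (sq_nonneg ‖v‖) (sq_nonneg (‖u‖ ^ 2 + t))]

namespace ContinuousLinearMap

theorem norm_sub_apply_le_of_isIdempotentElem {T : E →L[ℝ] E} (hT : IsIdempotentElem T)
    (h0 : T ≠ 0) (x : E) : ‖x - T x‖ ≤ ‖T‖ * ‖x‖ := by
  set u := T x
  set v := x - T x
  have hTu : T u = u := congr($hT x)
  have hTv : T v = 0 := by simp [v, hTu, u]
  have hx : u + v = x := add_sub_cancel _ _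
  rcases eq_or_ne u 0 with hu | hu
  · rw [show v = x by rw [← hx, hu, zero_add]]
    exact le_mul_of_one_le_left (norm_nonneg x) (hT.one_le_norm h0)
  rcases eq_or_ne v 0 with hv | hv
  · simp only [hv, norm_zero]; positivity
  have hy : T (‖v‖ ^ 2 • u - ⟪u, v⟫ • v) = ‖v‖ ^ 2 • u := by simp [hTu, hTv]
  have key : ‖v‖ * ‖u‖ * ‖v‖ ≤ ‖v‖ * ‖u‖ * (‖T‖ * ‖x‖) := calc
    ‖v‖ * ‖u‖ * ‖v‖ = ‖T (‖v‖ ^ 2 • u - ⟪u, v⟫ • v)‖ := by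
      rw [hy, norm_smul, norm_pow, norm_norm]; ring
    _ ≤ ‖T‖ * ‖‖v‖ ^ 2 • u - ⟪u, v⟫ • v‖ := T.le_opNorm _
    _ ≤ ‖T‖ * (‖v‖ * ‖u‖ * ‖u + v‖) := by gcongr; exact norm_sq_smul_sub_inner_smul_le u v
    _ = ‖v‖ * ‖u‖ * (‖T‖ * ‖x‖) := by rw [hx]; ring
  exact le_of_mul_le_mul_left key (by positivity)

theorem norm_one_sub_eq_norm_of_isIdempotentElem {T : E →L[ℝ] E} (hT : IsIdempotentElem T)
    (h0 : T ≠ 0) (h1 : T ≠ 1) : ‖1 - T‖ = ‖T‖ := by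
  have hQ0 : 1 - T ≠ 0 := sub_ne_zero.mpr h1.symm
  apply le_antisymm
  · refine opNorm_le_bound _ (norm_nonneg T) fun x => ?_
    simpa using norm_sub_apply_le_of_isIdempotentElem hT h0 x
  · refine opNorm_le_bound _ (norm_nonneg _) fun x => ?_
    simpa using norm_sub_apply_le_of_isIdempotentElem hT.one_sub hQ0 x

end ContinuousLinearMap

/-- Kato's equality: for a projector ℙ ≠ 0, ℙ ≠ I on ℝⁿ,
‖I − ℙ‖₂ = ‖ℙ‖₂. -/
theorem norm_one_sub_projector {n : ℕ}
    (P : Matrix (Fin n) (Fin n) ℝ) (hidem : P * P = P)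
    (h0 : P ≠ 0) (h1 : P ≠ 1) :
    spec (1 - P) = spec P := by
  let φ := Matrix.toEuclideanCLM (𝕜 := ℝ) (n := Fin n)
  have hφ : Function.Injective φ := φ.injective
  have hT : IsIdempotentElem (φ P) := IsIdempotentElem.map hidem φ
  have hT0 : φ P ≠ 0 := (map_ne_zero_iff φ hφ).mpr h0
  have hT1 : φ P ≠ 1 := by rwa [← map_one φ, hφ.ne_iff]
  change ‖φ (1 - P)‖ = ‖φ P‖
  rw [map_sub, map_one]
  exact ContinuousLinearMap.norm_one_sub_eq_norm_of_isIdempotentElem hT hT0 hT1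
end

section
/- Let Q ∈ ℝ^{n×k} have orthonormal columns, P ∈ ℝ^{n×k} a selection matrix with QᵀP invertible, and ℙ = P(QᵀP)⁻¹Qᵀ. Then Qᵀ(I − ℙ) = 0, and for any G ∈ ℝ^{d×n}, G(I − ℙ) = G(I − QQᵀ)(I − ℙ); consequently ‖G(I − ℙ)‖₂ ≤ ‖G(I − QQᵀ)‖₂ · ‖I − ℙ‖₂. -/
open Matrix

set_option maxHeartbeats 1000000 in
lemma spec_mul_le {m n p : ℕ} (A : Matrix (Fin m) (Fin n) ℝ) (B : Matrix (Fin n) (Fin p) ℝ) :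
    spec (A * B) ≤ spec A * spec B := by
  unfold spec
  have h : (Matrix.toEuclideanLin (A * B)) =
      (Matrix.toEuclideanLin A).comp (Matrix.toEuclideanLin B) := by
    rw [Matrix.toEuclideanLin_eq_toLin, Matrix.toEuclideanLin_eq_toLin,
      Matrix.toEuclideanLin_eq_toLin]
    exact Matrix.toLin_mul (PiLp.basisFun 2 ℝ (Fin p)) (PiLp.basisFun 2 ℝ (Fin n))
      (PiLp.basisFun 2 ℝ (Fin m)) A B
  have hc : LinearMap.toContinuousLinearMap (Matrix.toEuclideanLin (A * B)) =
      (LinearMap.toContinuousLinearMap (Matrix.toEuclideanLin A)).comp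
        (LinearMap.toContinuousLinearMap (Matrix.toEuclideanLin B)) := by
    apply ContinuousLinearMap.coeFn_injective
    show ⇑(Matrix.toEuclideanLin (A * B)) = ⇑((Matrix.toEuclideanLin A).comp (Matrix.toEuclideanLin B))
    exact congrArg DFunLike.coe h
  rw [hc]
  exact ContinuousLinearMap.opNorm_comp_le _ _

/-- for ℙ = P (QᵀP)⁻¹ Qᵀ with Q orthonormal columns,
Qᵀ(I − ℙ) = 0, G(I − ℙ) = G(I − QQᵀ)(I − ℙ), and
‖G(I − ℙ)‖₂ ≤ ‖G(I − QQᵀ)‖₂ · ‖I − ℙ‖₂. -/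
theorem oblique_projector_factorization {n k d : ℕ}
    (Q : Matrix (Fin n) (Fin k) ℝ) (hQ : Qᵀ * Q = 1)
    (P : Matrix (Fin n) (Fin k) ℝ) (hP : IsSelection P)
    (hinv : IsUnit (Qᵀ * P))
    (Pb : Matrix (Fin n) (Fin n) ℝ) (hPb : Pb = P * (Qᵀ * P)⁻¹ * Qᵀ)
    (G : Matrix (Fin d) (Fin n) ℝ) :
    Qᵀ * (1 - Pb) = 0 ∧
    G * (1 - Pb) = G * (1 - Q * Qᵀ) * (1 - Pb) ∧
    spec (G * (1 - Pb)) ≤ spec (G * (1 - Q * Qᵀ)) * spec (1 - Pb) := by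
  have hQP : (Qᵀ * P) * (Qᵀ * P)⁻¹ = 1 := Matrix.mul_nonsing_inv _ ((Matrix.isUnit_iff_isUnit_det _).mp hinv)
  have h1 : Qᵀ * (1 - Pb) = 0 := by
    rw [hPb, Matrix.mul_sub, Matrix.mul_one]
    have : Qᵀ * (P * (Qᵀ * P)⁻¹ * Qᵀ) = ((Qᵀ * P) * (Qᵀ * P)⁻¹) * Qᵀ := by
      simp only [Matrix.mul_assoc]
    rw [this, hQP, Matrix.one_mul, sub_self]
  have h2 : G * (1 - Pb) = G * (1 - Q * Qᵀ) * (1 - Pb) := by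
    have : G * (1 - Q * Qᵀ) * (1 - Pb) = G * (1 - Pb) - (G * Q) * (Qᵀ * (1 - Pb)) := by
      simp only [Matrix.mul_sub, Matrix.sub_mul, Matrix.mul_one, Matrix.one_mul,
        Matrix.mul_assoc]
      abel
    rw [this, h1, Matrix.mul_zero, sub_zero]
  refine ⟨h1, h2, ?_⟩
  rw [h2]
  exact spec_mul_le _ _
end
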